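/- As α → ∞, the surface-layer atomistic strain u₀ᵃ = φ'(2)/(φ''(1) + φ''(2)(1+λ)) satisfies u₀ᵃ = (e^{-α}/α)(1 - 4e^{-α}) + O(e^{-3α}/α). -/

import Mathlib

/-
With `q = e^{-α}`, the choice of `r₀` makes `e^{-α(1-r₀)} = (1+2q)/(1+2q²)`, so `φ'(2)`, `φ''(1)`
and `φ''(2)` are, up to one common positive factor, polynomials in `q`. The quadratic equation then
forces `λ ≤ 2q`, the normalized denominator of `u₀ᵃ` stays `≥ 1`, and `α u₀ᵃ - q(1-4q)` is `q` times a
defect that is `O(q²)`.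
-/

noncomputable def morseR0 (α : ℝ) : ℝ :=
  1 + (1 / α) * Real.log ((1 + 2 * Real.exp (-α)) / (1 + 2 * Real.exp (-2 * α)))

noncomputable def morse (α φ₀ : ℝ) (r : ℝ) : ℝ :=
  Real.exp (-2 * α * (r - morseR0 α)) - 2 * Real.exp (-α * (r - morseR0 α)) - φ₀

open Real Set

noncomputable def morseExp (α r : ℝ) : ℝ := exp (-α * (r - morseR0 α))

lemma morse_eq_morseExp (α φ₀ : ℝ) :
    morse α φ₀ = fun r => morseExp α r ^ 2 - 2 * morseExp α r - φ₀ := by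
  funext r
  rw [morse, morseExp, sq, ← exp_add]
  ring_nf

lemma hasDerivAt_morseExp (α r : ℝ) : HasDerivAt (morseExp α) (-α * morseExp α r) r := by
  have h := (((hasDerivAt_id r).sub_const (morseR0 α)).const_mul (-α)).exp
  exact h.congr_deriv (by rw [morseExp]; simp only [id, mul_one]; ring)

lemma hasDerivAt_morse (α φ₀ r : ℝ) :
    HasDerivAt (morse α φ₀) (2 * α * (morseExp α r * (1 - morseExp α r))) r := by
  rw [morse_eq_morseExp]
  have h := hasDerivAt_morseExp α r
  exact (((h.pow 2).sub (h.const_mul 2)).sub_const φ₀).congr_deriv (by push_cast; ring)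

lemma deriv_morse (α φ₀ : ℝ) :
    deriv (morse α φ₀) = fun r => 2 * α * (morseExp α r * (1 - morseExp α r)) :=
  funext fun r => (hasDerivAt_morse α φ₀ r).deriv

lemma deriv_deriv_morse (α φ₀ r : ℝ) :
    deriv (deriv (morse α φ₀)) r = 2 * α ^ 2 * (morseExp α r * (2 * morseExp α r - 1)) := by
  rw [deriv_morse]
  have h := hasDerivAt_morseExp α r
  exact (((h.mul (h.const_sub 1)).const_mul (2 * α)).congr_deriv (by ring)).deriv

lemma morseExp_add (α r s : ℝ) : morseExp α (r + s) = morseExp α r * exp (-α * s) := by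
  rw [morseExp, morseExp, ← exp_add]
  ring_nf

lemma morseExp_one {α : ℝ} (hα : α ≠ 0) :
    morseExp α 1 = (1 + 2 * exp (-α)) / (1 + 2 * exp (-2 * α)) := by
  rw [morseExp, morseR0, show -α * (1 - (1 + 1 / α * log ((1 + 2 * exp (-α)) /
    (1 + 2 * exp (-2 * α))))) = log ((1 + 2 * exp (-α)) / (1 + 2 * exp (-2 * α))) by
      field_simp; ring]
  exact exp_log (by positivity)

lemma exists_morse_derivs_eq_poly (φ₀ : ℝ) {α q : ℝ} (hα : 0 < α) (hq : exp (-α) = q) :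
    ∃ K : ℝ, 0 < K ∧ deriv (morse α φ₀) 2 = K / α * (q * (1 - q)) ∧
      deriv (deriv (morse α φ₀)) 1 = K * (1 + 4 * q - 2 * q ^ 2) ∧
      deriv (deriv (morse α φ₀)) 2 = K * (q * (2 * q ^ 2 + 2 * q - 1)) := by
  have hq2 : exp (-2 * α) = q ^ 2 := by rw [← hq, ← exp_nat_mul]; ring_nf
  have h1 : morseExp α 1 = (1 + 2 * q) / (1 + 2 * q ^ 2) := by
    rw [morseExp_one hα.ne', hq, hq2]
  have h2 : morseExp α 2 = (1 + 2 * q) / (1 + 2 * q ^ 2) * q := by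
    rw [show morseExp α 2 = morseExp α (1 + 1) by norm_num, morseExp_add, h1, mul_one, hq]
  have hq0 : 0 < q := hq ▸ exp_pos _
  refine ⟨2 * α ^ 2 * (1 + 2 * q) / (1 + 2 * q ^ 2) ^ 2, by positivity, ?_, ?_, ?_⟩
  · rw [deriv_morse]; dsimp only; rw [h2]; field_simp; ring
  · rw [deriv_deriv_morse, h1]; field_simp; ring
  · rw [deriv_deriv_morse, h2]; field_simp; ring

lemma mul_le_of_quadratic_root {A B lam : ℝ} (hB : B ≤ 0) (hlam : lam ^ 2 ≤ 1)
    (h : B * lam ^ 2 + (A + 2 * B) * lam + B = 0) : lam * (A + 2 * B) ≤ -2 * B := by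
  nlinarith

section Strain

variable {q lam : ℝ}

lemma root_le_two_mul (hq0 : 0 < q) (hq : q ≤ 1 / 10) (hlam : lam ∈ Ioo 0 1)
    (h : q * (2 * q ^ 2 + 2 * q - 1) * lam ^ 2
      + (1 + 4 * q - 2 * q ^ 2 + 2 * (q * (2 * q ^ 2 + 2 * q - 1))) * lam
      + q * (2 * q ^ 2 + 2 * q - 1) = 0) :
    lam ≤ 2 * q := by
  obtain ⟨hlam0, hlam1⟩ := hlam
  have hroot := mul_le_of_quadratic_root (by nlinarith) (by nlinarith) h
  have hsum : 1 ≤ 1 + 4 * q - 2 * q ^ 2 + 2 * (q * (2 * q ^ 2 + 2 * q - 1)) := by nlinarith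
  have hB : -2 * (q * (2 * q ^ 2 + 2 * q - 1)) ≤ 2 * q := by nlinarith
  nlinarith

lemma abs_strain_sub_le (hq0 : 0 < q) (hq : q ≤ 1 / 10) (hlam : lam ∈ Ioo 0 1)
    (h : q * (2 * q ^ 2 + 2 * q - 1) * lam ^ 2
      + (1 + 4 * q - 2 * q ^ 2 + 2 * (q * (2 * q ^ 2 + 2 * q - 1))) * lam
      + q * (2 * q ^ 2 + 2 * q - 1) = 0) :
    |q * (1 - q) / (1 + 4 * q - 2 * q ^ 2 + q * (2 * q ^ 2 + 2 * q - 1) * (1 + lam))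
      - q * (1 - 4 * q)| ≤ 15 * q ^ 3 := by
  have hlam2q := root_le_two_mul hq0 hq hlam h
  obtain ⟨hlam0, hlam1⟩ := hlam
  set D := 1 + 4 * q - 2 * q ^ 2 + q * (2 * q ^ 2 + 2 * q - 1) * (1 + lam)
  set P := 12 * q ^ 2 - 2 * q ^ 3 + 8 * q ^ 4 + lam * q * (1 - 6 * q + 6 * q ^ 2 + 8 * q ^ 3)
  have hc : 0 ≤ 1 - 2 * q - 2 * q ^ 2 := by nlinarith
  have hc' : 0 ≤ 1 - 6 * q + 6 * q ^ 2 + 8 * q ^ 3 := by nlinarith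
  have hlamq : lam * q ≤ 2 * q ^ 2 := by nlinarith
  have hD1 : 1 ≤ D := by nlinarith [mul_le_mul_of_nonneg_right hlam1.le (mul_nonneg hq0.le hc)]
  have hP : q * (1 - q) / D - q * (1 - 4 * q) = q * P / D := by
    field_simp
    ring
  have hP0 : 0 ≤ P := by nlinarith [mul_nonneg (mul_nonneg hlam0.le hq0.le) hc']
  have hP15 : P ≤ 15 * q ^ 2 := by
    nlinarith [mul_le_mul_of_nonneg_right hlamq hc', pow_le_pow_left₀ hq0.le hq 2]
  rw [hP, abs_of_nonneg (by positivity)]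
  calc q * P / D ≤ q * P := div_le_self (by positivity) hD1
    _ ≤ q * (15 * q ^ 2) := by gcongr
    _ = 15 * q ^ 3 := by ring

end Strain

/-- the surface-layer atomistic strain u₀ᵃ = φ'(2)/(φ''(1) + φ''(2)(1+λ))
satisfies u₀ᵃ = (e^{-α}/α)(1 - 4e^{-α}) + O(e^{-3α}/α) as α → ∞. -/
theorem stmt_9 (φ₀ : ℝ) :
    ∃ C α₀ : ℝ, 0 < C ∧ 0 < α₀ ∧ ∀ α : ℝ, α₀ ≤ α →
      ∀ lam : ℝ, lam ∈ Set.Ioo (0 : ℝ) 1 →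
        deriv (deriv (morse α φ₀)) 2 * lam ^ 2
          + (deriv (deriv (morse α φ₀)) 1 + 2 * deriv (deriv (morse α φ₀)) 2) * lam
          + deriv (deriv (morse α φ₀)) 2 = 0 →
        |deriv (morse α φ₀) 2 /
            (deriv (deriv (morse α φ₀)) 1 + deriv (deriv (morse α φ₀)) 2 * (1 + lam))
          - Real.exp (-α) / α * (1 - 4 * Real.exp (-α))|
          ≤ C * Real.exp (-3 * α) / α := by
  refine ⟨15, 9, by norm_num, by norm_num, fun α hα lam hlam hroot => ?_⟩
  have hα0 : 0 < α := by linarith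
  set q := exp (-α) with hq
  have hq0 : 0 < q := exp_pos _
  have hq10 : q ≤ 1 / 10 := by
    rw [hq, exp_neg, inv_eq_one_div]
    gcongr
    linarith [add_one_le_exp α]
  have hq3 : exp (-3 * α) = q ^ 3 := by rw [hq, ← exp_nat_mul]; ring_nf
  obtain ⟨K, hK, h1, h2, h3⟩ := exists_morse_derivs_eq_poly φ₀ hα0 hq.symm
  rw [h2, h3] at hroot
  rw [h1, h2, h3, hq3]
  have hstrain := abs_strain_sub_le hq0 hq10 hlam (by
    apply mul_left_cancel₀ hK.ne'
    linear_combination hroot)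
  have hscale : K / α * (q * (1 - q)) /
        (K * (1 + 4 * q - 2 * q ^ 2) + K * (q * (2 * q ^ 2 + 2 * q - 1)) * (1 + lam))
        - q / α * (1 - 4 * q)
      = (q * (1 - q) / (1 + 4 * q - 2 * q ^ 2 + q * (2 * q ^ 2 + 2 * q - 1) * (1 + lam))
        - q * (1 - 4 * q)) / α := by
    field_simp
  rw [hscale, abs_div, abs_of_pos hα0]
  gcongr
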